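/- Two trees with ω levels, all levels finite, are locally isomorphic (for every n, the unions of their first n levels are order-isomorphic) if and only if they are elementarily equivalent as structures in the language of one binary relation (the order). -/

import Mathlib

/-- A well-founded tree order of height at most ω: a partial order with a least
element (root) in which the set of predecessors of every element is finite and
linearly ordered. -/
structure TreeOrder (T : Type*) where
  le : T → T → Prop
  refl : ∀ x, le x x
  antisymm : ∀ x y, le x y → le y x → x = y
  trans : ∀ x y z, le x y → le y z → le x z
  root : T
  root_le : ∀ x, le root x
  pred_finite : ∀ x, {y | le y x}.Finite
  pred_chain : ∀ x y z, le y x → le z x → le y z ∨ le z y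

namespace TreeOrder

variable {T : Type*} (t : TreeOrder T)

/-- The strict order associated to a tree order. -/
def lt (x y : T) : Prop := t.le x y ∧ x ≠ y

/-- The `n`-th level: elements with exactly `n` strict predecessors. -/
def level (n : ℕ) : Set T := {x | {y | t.lt y x}.ncard = n}

/-- The tree has ω levels: every level is nonempty. -/
def OmegaLevels : Prop := ∀ n, (t.level n).Nonempty

/-- All levels are finite. -/
def FiniteLevels : Prop := ∀ n, (t.level n).Finite

/-- No leaves: every element has a strict successor. -/
def NoLeaves : Prop := ∀ x, ∃ y, t.lt x y

/-- `y` is an immediate successor of `x`. -/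
def ImmSucc (x y : T) : Prop := t.lt x y ∧ ¬ ∃ z, t.lt x z ∧ t.lt z y

/-- Union of the first `n` levels. -/
def below (n : ℕ) : Set T := {x | ∃ k < n, x ∈ t.level k}

end TreeOrder

/-!
Local isomorphism gives a global isomorphism by Kőnig's lemma: restricting maps the
isomorphisms between the first `n` levels into those between the first `m ≤ n` levels, these
sets are finite and nonempty, and a compatible sequence glues to an isomorphism of the trees.

Conversely, the first `n` levels are the elements with fewer than `n` strict predecessors, a
first-order property. As this set is finite, a single sentence says that it is enumerated by a
tuple with a prescribed order diagram, and this sentence transfers along elementary equivalence.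
-/

open FirstOrder Language Function

theorem Set.exists_injective_fin_iff_le_ncard {α : Type*} {s : Set α} (hs : s.Finite) {n : ℕ} :
    (∃ y : Fin n → α, Injective y ∧ ∀ k, y k ∈ s) ↔ n ≤ s.ncard := by
  constructor
  · rintro ⟨y, hy, hys⟩
    simpa [Set.ncard_range_of_injective hy] using
      Set.ncard_le_ncard (Set.range_subset_iff.2 hys) hs
  · intro hn
    obtain ⟨u, hus, hu⟩ := Finset.exists_subset_card_eq (n := n) (s := hs.toFinset)
      (by rwa [← Set.ncard_eq_toFinset_card s hs])
    exact ⟨fun k => (u.equivFinOfCardEq hu).symm k, Subtype.val_injective.comp (Equiv.injective _),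
      fun k => hs.mem_toFinset.1 (hus ((u.equivFinOfCardEq hu).symm k).2)⟩

namespace FirstOrder.Language

theorem Formula.realize_ite_not {L : Language} {α M : Type*} [L.Structure M] (P : Prop)
    [Decidable P] (φ : L.Formula α) (v : α → M) :
    (if P then φ else ∼φ).Realize v ↔ (φ.Realize v ↔ P) := by
  split_ifs with h <;> simp [h]

namespace order

instance orderedStructure_orderStructure {M : Type*} [LE M] :
    @OrderedStructure Language.order M _ _ (orderStructure M) :=
  @OrderedStructure.mk _ _ _ _ (orderStructure M) fun _ => Iff.rfl

variable {α M N : Type*}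

open Classical in
noncomputable def atomicDiagram [Finite α] [LE M] (a : α → M) : Language.order.Formula α :=
  Formula.iInf fun p : α × α =>
    let eq := Term.equal (var p.1) (var p.2)
    let le := (leSymb : Language.order.Relations 2).formula₂ (var p.1) (var p.2)
    (if a p.1 = a p.2 then eq else ∼eq) ⊓ (if a p.1 ≤ a p.2 then le else ∼le)

noncomputable def fewerLowerBounds (n : ℕ) : Language.order.Formula Unit :=
  ∼(Formula.iExs (Fin n)
    ((Formula.iInf fun p : {p : Fin n × Fin n // p.1 ≠ p.2} =>
        ∼(Term.equal (var (Sum.inr p.1.1)) (var (Sum.inr p.1.2)))) ⊓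
      Formula.iInf fun k : Fin n =>
        (leSymb : Language.order.Relations 2).formula₂ (var (Sum.inr k)) (var (Sum.inl ())) ⊓
          ∼(Term.equal (var (Sum.inr k)) (var (Sum.inl ())))))

variable [LE M] [LE N] [Language.order.Structure N] [Language.order.OrderedStructure N]

theorem realize_atomicDiagram [Finite α] (a : α → M) (x : α → N) :
    (atomicDiagram a).Realize x ↔ ∀ i j, (x i = x j ↔ a i = a j) ∧ (x i ≤ x j ↔ a i ≤ a j) := by
  simp only [atomicDiagram, Formula.realize_iInf, Formula.realize_inf, Formula.realize_ite_not,
    Formula.realize_equal, Formula.realize_rel₂, relMap_leSymb, Term.realize_var, Prod.forall]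
  rfl

omit [LE M] in
theorem realize_fewerLowerBounds (n : ℕ) (x : N) :
    (fewerLowerBounds n).Realize (fun _ => x) ↔
      ¬ ∃ y : Fin n → N, Injective y ∧ ∀ k, y k ≤ x ∧ y k ≠ x := by
  simp only [fewerLowerBounds, Formula.realize_not, Formula.realize_iExs, Formula.realize_inf,
    Formula.realize_iInf, Formula.realize_equal, Formula.realize_rel₂, relMap_leSymb,
    Term.realize_var, Sum.elim_inl, Sum.elim_inr, injective_iff_pairwise_ne, Pairwise,
    Subtype.forall, Prod.forall, onFun, Matrix.cons_val_zero, Matrix.cons_val_one]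

/-- Some `(x s)_{s ∈ S}` has the atomic diagram of `S` and enumerates the set defined by `φ`. -/
noncomputable def diagramSentence (φ : Language.order.Formula Unit) (S : Set M) [Finite S] :
    Language.order.Sentence :=
  Formula.iExs S ((atomicDiagram (Subtype.val : S → M)).relabel Sum.inr ⊓
    Formula.iAlls Unit ((φ.relabel Sum.inr).iff
      (Formula.iSup fun s : S => Term.equal (var (Sum.inr ())) (var (Sum.inl (Sum.inr s))))))

theorem realize_diagramSentence (φ : Language.order.Formula Unit) (S : Set M) [Finite S] :
    N ⊨ diagramSentence φ S ↔ ∃ x : S → N,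
      (∀ i j, (x i = x j ↔ i = j) ∧ (x i ≤ x j ↔ (i : M) ≤ j)) ∧
        ∀ y, φ.Realize (fun _ => y) ↔ ∃ s, y = x s := by
  simp only [diagramSentence, Sentence.Realize, Formula.realize_iExs, Formula.realize_inf,
    Formula.realize_relabel, realize_atomicDiagram, Formula.realize_iAlls, Formula.realize_iff,
    Formula.realize_iSup, Formula.realize_equal, Term.realize_var, Subtype.ext_iff,
    comp_def, Sum.elim_inl, Sum.elim_inr]
  refine exists_congr fun x => and_congr Iff.rfl ?_
  exact (Equiv.funUnique Unit N).forall_congr_left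

end order

open order in
theorem ElementarilyEquivalent.exists_bijOn_of_finite_definable {M N : Type*}
    [LE M] [Language.order.Structure M] [Language.order.OrderedStructure M]
    [LE N] [Language.order.Structure N] [Language.order.OrderedStructure N] [Nonempty N]
    (h : M ≅[Language.order] N) (φ : Language.order.Formula Unit)
    (hfin : {x : M | φ.Realize fun _ => x}.Finite) :
    ∃ f : M → N, Set.BijOn f {x | φ.Realize fun _ => x} {y | φ.Realize fun _ => y} ∧
      ∀ x ∈ {x : M | φ.Realize fun _ => x}, ∀ y ∈ {x : M | φ.Realize fun _ => x},
        (x ≤ y ↔ f x ≤ f y) := by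
  classical
  set S := {x : M | φ.Realize fun _ => x}
  have := hfin.to_subtype
  have hM : M ⊨ diagramSentence φ S :=
    (realize_diagramSentence φ S).2 ⟨Subtype.val, fun i j => ⟨Subtype.ext_iff.symm, Iff.rfl⟩,
      fun y => ⟨fun hy => ⟨⟨y, hy⟩, rfl⟩, by rintro ⟨s, rfl⟩; exact s.2⟩⟩
  obtain ⟨x, hdiag, hrange⟩ := (realize_diagramSentence φ S).1 ((h.realize_sentence _).1 hM)
  let f : M → N := fun m => if hm : m ∈ S then x ⟨m, hm⟩ else Classical.arbitrary N
  have hf : ∀ s : S, f s = x s := fun s => dif_pos s.2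
  refine ⟨f, ⟨fun m hm => ?_, fun m hm m' hm' hmm' => ?_, fun y hy => ?_⟩, fun m hm m' hm' => ?_⟩
  · exact (hrange _).2 ⟨⟨m, hm⟩, hf ⟨m, hm⟩⟩
  · rw [hf ⟨m, hm⟩, hf ⟨m', hm'⟩] at hmm'
    exact congrArg Subtype.val (((hdiag _ _).1).1 hmm')
  · obtain ⟨s, rfl⟩ := (hrange y).1 hy
    exact ⟨s, s.2, hf s⟩
  · rw [hf ⟨m, hm⟩, hf ⟨m', hm'⟩]
    exact ((hdiag ⟨m, hm⟩ ⟨m', hm'⟩).2).symm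

end FirstOrder.Language

namespace TreeOrder

section OneTree

variable {T : Type*} (t : TreeOrder T)

theorem lt_of_lt_of_le {x y z : T} (hxy : t.lt x y) (hyz : t.le y z) : t.lt x z :=
  ⟨t.trans _ _ _ hxy.1 hyz, fun hxz => hxy.2 (t.antisymm _ _ hxy.1 (hxz ▸ hyz))⟩

theorem finite_setOf_lt (x : T) : {y | t.lt y x}.Finite :=
  (t.pred_finite x).subset fun _ hy => hy.1

/-- Chosen so that `t.level n = {x | t.depth x = n}` holds by definition. -/
noncomputable def depth (x : T) : ℕ := {y | t.lt y x}.ncard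

theorem depth_lt_depth {x y : T} (hyx : t.lt y x) : t.depth y < t.depth x :=
  Set.ncard_lt_ncard ⟨fun _ hz => t.lt_of_lt_of_le hz hyx.1, fun h => (h hyx).2 rfl⟩
    (t.finite_setOf_lt x)

theorem mem_below_iff {x : T} {n : ℕ} : x ∈ t.below n ↔ t.depth x < n :=
  ⟨fun ⟨_, hk, (hx : t.depth x = _)⟩ => hx ▸ hk, fun hx => ⟨_, hx, rfl⟩⟩

theorem mem_below_depth_succ (x : T) : x ∈ t.below (t.depth x + 1) :=
  t.mem_below_iff.2 (Nat.lt_succ_self _)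

theorem exists_mem_below (x y : T) : ∃ n, x ∈ t.below n ∧ y ∈ t.below n :=
  ⟨max (t.depth x) (t.depth y) + 1, t.mem_below_iff.2 (by omega), t.mem_below_iff.2 (by omega)⟩

theorem below_mono {m n : ℕ} (hmn : m ≤ n) : t.below m ⊆ t.below n := fun _ hx =>
  t.mem_below_iff.2 ((t.mem_below_iff.1 hx).trans_le hmn)

theorem mem_below_of_lt {x y : T} {n : ℕ} (hx : x ∈ t.below n) (hyx : t.lt y x) :
    y ∈ t.below n :=
  t.mem_below_iff.2 ((t.depth_lt_depth hyx).trans (t.mem_below_iff.1 hx))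

theorem below_finite (ht : t.FiniteLevels) (n : ℕ) : (t.below n).Finite :=
  ((Set.finite_Iio n).biUnion fun k _ => ht k).subset fun _ ⟨_, hk, hx⟩ =>
    Set.mem_biUnion hk hx

theorem setOf_realize_fewerLowerBounds (n : ℕ) :
    letI : LE T := ⟨t.le⟩
    letI := orderStructure T
    {x : T | (order.fewerLowerBounds n).Realize fun _ => x} = t.below n := by
  let : LE T := ⟨t.le⟩
  let := orderStructure T
  ext x
  rw [Set.mem_ofPred_eq, order.realize_fewerLowerBounds, t.mem_below_iff, ← not_le]
  exact not_congr (Set.exists_injective_fin_iff_le_ncard (t.finite_setOf_lt x))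

end OneTree

section TwoTrees

variable {T₁ T₂ : Type*} (t₁ : TreeOrder T₁) (t₂ : TreeOrder T₂)

def IsIsoBelow (n : ℕ) (f : T₁ → T₂) : Prop :=
  Set.BijOn f (t₁.below n) (t₂.below n) ∧
    ∀ x ∈ t₁.below n, ∀ y ∈ t₁.below n, (t₁.le x y ↔ t₂.le (f x) (f y))

def IsIso (f : T₁ → T₂) : Prop :=
  Bijective f ∧ ∀ x y, t₁.le x y ↔ t₂.le (f x) (f y)

variable {t₁ t₂}

theorem IsIsoBelow.image_setOf_lt {n : ℕ} {f : T₁ → T₂} (hf : IsIsoBelow t₁ t₂ n f) {x : T₁}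
    (hx : x ∈ t₁.below n) : f '' {y | t₁.lt y x} = {z | t₂.lt z (f x)} := by
  ext z
  constructor
  · rintro ⟨y, hyx, rfl⟩
    have hy := t₁.mem_below_of_lt hx hyx
    exact ⟨(hf.2 y hy x hx).1 hyx.1, fun h => hyx.2 (hf.1.injOn hy hx h)⟩
  · intro hzx
    obtain ⟨y, hy, rfl⟩ := hf.1.surjOn (t₂.mem_below_of_lt (hf.1.mapsTo hx) hzx)
    exact ⟨y, ⟨(hf.2 y hy x hx).2 hzx.1, fun h => hzx.2 (congrArg f h)⟩, rfl⟩

theorem IsIsoBelow.depth_apply {n : ℕ} {f : T₁ → T₂} (hf : IsIsoBelow t₁ t₂ n f) {x : T₁}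
    (hx : x ∈ t₁.below n) : t₂.depth (f x) = t₁.depth x := by
  rw [depth, depth, ← hf.image_setOf_lt hx]
  exact (hf.1.injOn.mono fun _ => t₁.mem_below_of_lt hx).ncard_image

theorem IsIsoBelow.mono {m n : ℕ} {f : T₁ → T₂} (hf : IsIsoBelow t₁ t₂ n f) (hmn : m ≤ n) :
    IsIsoBelow t₁ t₂ m f := by
  have hbelow {x} (hx : x ∈ t₁.below m) : x ∈ t₁.below n := t₁.below_mono hmn hx
  refine ⟨⟨fun x hx => ?_, hf.1.injOn.mono fun _ => hbelow, fun z hz => ?_⟩,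
    fun x hx y hy => hf.2 x (hbelow hx) y (hbelow hy)⟩
  · rw [t₂.mem_below_iff, hf.depth_apply (hbelow hx)]
    exact t₁.mem_below_iff.1 hx
  · obtain ⟨x, hx, rfl⟩ := hf.1.surjOn (t₂.below_mono hmn hz)
    rw [t₂.mem_below_iff, hf.depth_apply hx] at hz
    exact ⟨x, t₁.mem_below_iff.2 hz, rfl⟩

theorem isIso_of_forall_isIsoBelow_eqOn {g : T₁ → T₂}
    (hg : ∀ n, ∃ f, IsIsoBelow t₁ t₂ n f ∧ Set.EqOn g f (t₁.below n)) : IsIso t₁ t₂ g := by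
  refine ⟨⟨fun x y hxy => ?_, fun z => ?_⟩, fun x y => ?_⟩
  · obtain ⟨n, hx, hy⟩ := t₁.exists_mem_below x y
    obtain ⟨f, hf, hgf⟩ := hg n
    exact hf.1.injOn hx hy (by rwa [← hgf hx, ← hgf hy])
  · obtain ⟨f, hf, hgf⟩ := hg (t₂.depth z + 1)
    obtain ⟨x, hx, rfl⟩ := hf.1.surjOn (t₂.mem_below_depth_succ z)
    exact ⟨x, hgf hx⟩
  · obtain ⟨n, hx, hy⟩ := t₁.exists_mem_below x y
    obtain ⟨f, hf, hgf⟩ := hg n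
    rw [hgf hx, hgf hy]
    exact hf.2 x hx y hy

theorem exists_isIso_of_forall_isIsoBelow (ht₁ : t₁.FiniteLevels)
    (h : ∀ n, ∃ f, IsIsoBelow t₁ t₂ n f) : ∃ g, IsIso t₁ t₂ g := by
  let α (n : ℕ) := {g : t₁.below n → T₂ // ∃ f, IsIsoBelow t₁ t₂ n f ∧ ∀ x, g x = f x}
  let π {m n : ℕ} (hmn : m ≤ n) (g : α n) : α m :=
    ⟨g.1 ∘ Set.inclusion (t₁.below_mono hmn),
      g.2.imp fun _ hf => ⟨hf.1.mono hmn, fun _ => hf.2 _⟩⟩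
  have (n : ℕ) : Nonempty (α n) :=
    (h n).elim fun f hf => ⟨⟨fun x => f x, f, hf, fun _ => rfl⟩⟩
  have (n : ℕ) : Finite (α n) := by
    obtain ⟨f, hf⟩ := h n
    have : Finite (t₁.below n) := (t₁.below_finite ht₁ n).to_subtype
    have : Finite (t₂.below n) := (hf.1.image_eq ▸ (t₁.below_finite ht₁ n).image f).to_subtype
    refine Finite.of_injective (β := t₁.below n → t₂.below n)
      (fun g x => ⟨g.1 x, ?_⟩) fun g g' hgg' => Subtype.ext (funext fun x => ?_)
    · obtain ⟨f, hf, hgf⟩ := g.2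
      exact hgf x ▸ hf.1.mapsTo x.2
    · exact congrArg Subtype.val (congrFun hgg' x)
  obtain ⟨F, hF⟩ := exists_seq_forall_proj_of_forall_finite π (fun _ _ => rfl)
    (fun _ _ _ _ _ _ => rfl) fun _ _ => Set.toFinite _
  refine ⟨fun x => (F (t₁.depth x + 1)).1 ⟨x, t₁.mem_below_depth_succ x⟩,
    isIso_of_forall_isIsoBelow_eqOn fun n => ?_⟩
  obtain ⟨f, hf, hFf⟩ := (F n).2
  refine ⟨f, hf, fun x hx => ?_⟩
  show (F (t₁.depth x + 1)).1 ⟨x, _⟩ = f x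
  rw [← hFf ⟨x, hx⟩, ← hF (t₁.mem_below_iff.1 hx)]
  rfl

theorem IsIso.elementarilyEquivalent {g : T₁ → T₂} (hg : IsIso t₁ t₂ g) :
    letI : LE T₁ := ⟨t₁.le⟩
    letI : LE T₂ := ⟨t₂.le⟩
    letI := orderStructure T₁
    letI := orderStructure T₂
    ElementarilyEquivalent Language.order T₁ T₂ :=
  letI : LE T₁ := ⟨t₁.le⟩
  letI : LE T₂ := ⟨t₂.le⟩
  letI := orderStructure T₁
  letI := orderStructure T₂
  StrongHomClass.elementarilyEquivalent
    ({ Equiv.ofBijective g hg.1 with map_rel_iff' := (hg.2 _ _).symm } : T₁ ≃o T₂)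

theorem exists_isIsoBelow_of_elementarilyEquivalent (ht₁ : t₁.FiniteLevels)
    (h : letI : LE T₁ := ⟨t₁.le⟩
      letI : LE T₂ := ⟨t₂.le⟩
      letI := orderStructure T₁
      letI := orderStructure T₂
      ElementarilyEquivalent Language.order T₁ T₂) (n : ℕ) :
    ∃ f, IsIsoBelow t₁ t₂ n f := by
  let : LE T₁ := ⟨t₁.le⟩
  let : LE T₂ := ⟨t₂.le⟩
  let := orderStructure T₁
  let := orderStructure T₂
  have : Nonempty T₂ := ⟨t₂.root⟩
  have h₁ := t₁.setOf_realize_fewerLowerBounds n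
  have h₂ := t₂.setOf_realize_fewerLowerBounds n
  obtain ⟨f, hf⟩ := h.exists_bijOn_of_finite_definable (order.fewerLowerBounds n)
    (h₁ ▸ t₁.below_finite ht₁ n)
  rw [h₁, h₂] at hf
  exact ⟨f, hf⟩

end TwoTrees

end TreeOrder

theorem stmt7_general {T₁ T₂ : Type*} (t1 : TreeOrder T₁) (t2 : TreeOrder T₂)
    (h1f : t1.FiniteLevels) :
    (∀ n, ∃ f : T₁ → T₂, Set.BijOn f (t1.below n) (t2.below n) ∧
        ∀ x ∈ t1.below n, ∀ y ∈ t1.below n, (t1.le x y ↔ t2.le (f x) (f y))) ↔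
      (letI : LE T₁ := ⟨t1.le⟩
       letI : LE T₂ := ⟨t2.le⟩
       letI := FirstOrder.Language.orderStructure T₁
       letI := FirstOrder.Language.orderStructure T₂
       FirstOrder.Language.ElementarilyEquivalent FirstOrder.Language.order T₁ T₂) :=
  ⟨fun h => (TreeOrder.exists_isIso_of_forall_isIsoBelow h1f h).elim
      fun _ hg => hg.elementarilyEquivalent,
    TreeOrder.exists_isIsoBelow_of_elementarilyEquivalent h1f⟩

/-- Two trees with ω levels, all finite, are locally isomorphic iff they are
elementarily equivalent in the language of one binary relation. -/
theorem stmt7 {T₁ T₂ : Type*} (t1 : TreeOrder T₁) (t2 : TreeOrder T₂)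
    (h1o : t1.OmegaLevels) (h1f : t1.FiniteLevels)
    (h2o : t2.OmegaLevels) (h2f : t2.FiniteLevels) :
    (∀ n, ∃ f : T₁ → T₂, Set.BijOn f (t1.below n) (t2.below n) ∧
        ∀ x ∈ t1.below n, ∀ y ∈ t1.below n, (t1.le x y ↔ t2.le (f x) (f y))) ↔
      (letI : LE T₁ := ⟨t1.le⟩
       letI : LE T₂ := ⟨t2.le⟩
       letI := FirstOrder.Language.orderStructure T₁
       letI := FirstOrder.Language.orderStructure T₂
       FirstOrder.Language.ElementarilyEquivalent FirstOrder.Language.order T₁ T₂) :=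
  stmt7_general t1 t2 h1f
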